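/- arXiv:2005.08600 — 4 statements merged into one kernel-verified Lean document; each statement's English description precedes it below -/
import Mathlib

section
/- Filtering Lemma (stated for dimension 0; dimension 1 is symmetric): Let T = [t0, t1] × [u0, u1] and T' = [s0, t0] × [u0, u1] be closed boxes in ℝ² with s0 ≤ t0 ≤ t1 and u0 ≤ u1, so that T' immediately precedes T in dimension 0 (sharing the endpoint t0 and having the same interval in dimension 1). Let r and W be nonempty closed boxes in ℝ² such that r ∩ T ≠ ∅, W ∩ T ≠ ∅, the lower endpoint of r in dimension 0 is strictly less than t0 (r starts before T in dimension 0), the lower endpoint of W in dimension 0 is strictly less than t0 (W starts before T in dimension 0), and r ∩ W ≠ ∅. Then r ∩ T' ≠ ∅ and W ∩ T' ≠ ∅; hence any intersecting pair (r, W) skipped at tile T by the filtering rule is guaranteed to be detectable at the previous tile T'. -/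
/-- **Filtering Lemma** (dimension 0). Tiles `T = [t0,t1] × [u0,u1]` and
`T' = [s0,t0] × [u0,u1]` with `T' = prev(T,0)`. If boxes `r` and `W` both
intersect `T`, both start before `T` in dimension 0 (their low `x`-endpoints
are strictly less than `t0`), and `r ∩ W ≠ ∅`, then both `r` and `W`
intersect the previous tile `T'`. -/
theorem filtering_lemma_dim0
    (s0 t0 t1 u0 u1 : ℝ) (hst : s0 ≤ t0) (htt : t0 ≤ t1) (huu : u0 ≤ u1)
    (rx0 rx1 ry0 ry1 wx0 wx1 wy0 wy1 : ℝ)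
    (hrx : rx0 ≤ rx1) (hry : ry0 ≤ ry1) (hwx : wx0 ≤ wx1) (hwy : wy0 ≤ wy1)
    (T : Set (ℝ × ℝ)) (hT : T = Set.Icc t0 t1 ×ˢ Set.Icc u0 u1)
    (T' : Set (ℝ × ℝ)) (hT' : T' = Set.Icc s0 t0 ×ˢ Set.Icc u0 u1)
    (r : Set (ℝ × ℝ)) (hr : r = Set.Icc rx0 rx1 ×ˢ Set.Icc ry0 ry1)
    (W : Set (ℝ × ℝ)) (hW : W = Set.Icc wx0 wx1 ×ˢ Set.Icc wy0 wy1)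
    (hrT : (r ∩ T).Nonempty) (hWT : (W ∩ T).Nonempty)
    (hr_before : rx0 < t0) (hW_before : wx0 < t0)
    (hrW : (r ∩ W).Nonempty) :
    (r ∩ T').Nonempty ∧ (W ∩ T').Nonempty := by
  subst hT hT' hr hW
  obtain ⟨⟨px, py⟩, ⟨⟨hpx1, hpx2⟩, hpy⟩, ⟨hpx3, _⟩, hpy2⟩ := hrT
  obtain ⟨⟨qx, qy⟩, ⟨⟨hqx1, hqx2⟩, hqy⟩, ⟨hqx3, _⟩, hqy2⟩ := hWT
  refine ⟨⟨(max rx0 s0, py), ⟨⟨le_max_left _ _, ?_⟩, hpy⟩, ⟨le_max_right _ _, ?_⟩, hpy2⟩,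
          ⟨(max wx0 s0, qy), ⟨⟨le_max_left _ _, ?_⟩, hqy⟩, ⟨le_max_right _ _, ?_⟩, hqy2⟩⟩ <;>
    simp only [max_le_iff] <;>
    constructor <;> linarith
end

section
/- Refinement avoidance for window queries with coverage in one dimension: Let O be a nonempty compact connected subset of ℝ² with minimum bounding box MBR(O) = [a0, b0] × [a1, b1], where a_i and b_i are the infimum and supremum of the i-th coordinate over O. Let W = [c0, d0] × [c1, d1] be a nonempty closed box with MBR(O) ∩ W ≠ ∅. If W covers MBR(O) in some dimension i, i.e., c_i ≤ a_i and b_i ≤ d_i, then O ∩ W ≠ ∅; that is, whatever the geometry of the (connected) object is, it definitely intersects the window, and no refinement step is needed. -/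
/-- **Refinement avoidance for window queries with coverage in one dimension.**
Let `O ⊆ ℝ²` be nonempty, compact and connected, with minimum bounding box
`[a0, b0] × [a1, b1]` (coordinatewise inf/sup over `O`). Let
`W = [c0, d0] × [c1, d1]` be a nonempty closed box intersecting the bounding
box. If `W` covers the bounding box in some dimension (i.e. `c0 ≤ a0` and
`b0 ≤ d0`, or `c1 ≤ a1` and `b1 ≤ d1`), then `O` intersects `W`. -/
theorem refinement_avoidance_window_coverage
    (O : Set (ℝ × ℝ)) (hO : O.Nonempty) (hOc : IsCompact O)
    (hOconn : IsConnected O)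
    (a0 b0 a1 b1 : ℝ)
    (ha0 : a0 = sInf (Prod.fst '' O)) (hb0 : b0 = sSup (Prod.fst '' O))
    (ha1 : a1 = sInf (Prod.snd '' O)) (hb1 : b1 = sSup (Prod.snd '' O))
    (c0 d0 c1 d1 : ℝ) (hW0 : c0 ≤ d0) (hW1 : c1 ≤ d1)
    (W : Set (ℝ × ℝ)) (hW : W = Set.Icc c0 d0 ×ˢ Set.Icc c1 d1)
    (hMBRW : ((Set.Icc a0 b0 ×ˢ Set.Icc a1 b1) ∩ W).Nonempty)
    (hcover : (c0 ≤ a0 ∧ b0 ≤ d0) ∨ (c1 ≤ a1 ∧ b1 ≤ d1)) :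
    (O ∩ W).Nonempty := by
  obtain ⟨p, hpM, hpW⟩ := hMBRW
  rw [hW] at hpW
  have hF : IsCompact (Prod.fst '' O) := hOc.image continuous_fst
  have hS : IsCompact (Prod.snd '' O) := hOc.image continuous_snd
  have hFc : IsConnected (Prod.fst '' O) := hOconn.image _ continuous_fst.continuousOn
  have hSc : IsConnected (Prod.snd '' O) := hOconn.image _ continuous_snd.continuousOn
  have hFeq : Prod.fst '' O = Set.Icc a0 b0 := by
    rw [ha0, hb0]; exact eq_Icc_of_connected_compact hFc hF
  have hSeq : Prod.snd '' O = Set.Icc a1 b1 := by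
    rw [ha1, hb1]; exact eq_Icc_of_connected_compact hSc hS
  rcases hcover with ⟨hc, hd⟩ | ⟨hc, hd⟩
  · -- dimension 0 covered; use y-coordinate of p to find a point of O
    have hy : p.2 ∈ Prod.snd '' O := by rw [hSeq]; exact hpM.2
    obtain ⟨q, hqO, hq2⟩ := hy
    have hq1 : q.1 ∈ Set.Icc a0 b0 := by rw [← hFeq]; exact ⟨q, hqO, rfl⟩
    refine ⟨q, hqO, ?_⟩
    rw [hW]
    exact ⟨⟨hc.trans hq1.1, hq1.2.trans hd⟩, hq2 ▸ hpW.2⟩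
  · have hx : p.1 ∈ Prod.fst '' O := by rw [hFeq]; exact hpM.1
    obtain ⟨q, hqO, hq1⟩ := hx
    have hq2 : q.2 ∈ Set.Icc a1 b1 := by rw [← hSeq]; exact ⟨q, hqO, rfl⟩
    refine ⟨q, hqO, ?_⟩
    rw [hW]
    exact ⟨hq1 ▸ hpW.1, ⟨hc.trans hq2.1, hq2.2.trans hd⟩⟩
end

section
/- Refinement avoidance for disk queries: Let O be a nonempty compact subset of the Euclidean plane with minimum bounding box [a0, b0] × [a1, b1], where a_i and b_i are the infimum and supremum of the i-th coordinate over O. Let q be a point and ε ≥ 0. If at least two of the four corners (a_u-or-b_u, a_v-or-b_v) of the bounding box, indexed by distinct index pairs, lie within Euclidean distance ε of q, then there exists a point p ∈ O with dist(p, q) ≤ ε; i.e., the object is guaranteed to intersect the disk of radius ε centered at q and the refinement step can be avoided. -/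
/-!
The corners of the bounding box are the points `(e₀, e₁)` with `eᵢ ∈ {aᵢ, bᵢ}`, and every
extreme value `eᵢ` is attained by a point of `O`. Two distinct corners differ in some
coordinate `i`, so between them they use both `aᵢ` and `bᵢ`; let `c` be the one whose
`i`-th coordinate is farther from `qᵢ`. A point `p ∈ O` attaining the other coordinate of `c`
has `|pᵢ - qᵢ| ≤ |cᵢ - qᵢ|`, because `pᵢ ∈ [aᵢ, bᵢ]` and distance to `qᵢ` is convex, so `p`
is at least as close to `q` as the corner `c`.
-/

open Set

theorem EuclideanSpace.dist_le_dist_of_forall_dist_apply_le {ι : Type*} [Fintype ι]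
    {x y q : EuclideanSpace ℝ ι} (h : ∀ i, dist (x i) (q i) ≤ dist (y i) (q i)) :
    dist x q ≤ dist y q := by
  rw [EuclideanSpace.dist_eq, EuclideanSpace.dist_eq]
  gcongr with i
  exact h i

theorem Real.dist_le_max_of_mem_uIcc {x y z c : ℝ} (hz : z ∈ uIcc x y) :
    dist z c ≤ max (dist x c) (dist y c) :=
  (convexOn_dist c convex_univ).le_on_segment trivial trivial (segment_eq_uIcc x y ▸ hz)

theorem exists_mem_dist_le_max_of_mem_uIcc {O : Set (EuclideanSpace ℝ (Fin 2))} {i j : Fin 2}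
    (hij : i ≠ j) {c c' : EuclideanSpace ℝ (Fin 2)} (q : EuclideanSpace ℝ (Fin 2))
    (hO : ∀ x ∈ O, x i ∈ uIcc (c i) (c' i))
    (hc : ∃ p ∈ O, p j = c j) (hc' : ∃ p ∈ O, p j = c' j) :
    ∃ p ∈ O, dist p q ≤ max (dist c q) (dist c' q) := by
  have hk : ∀ k, k = i ∨ k = j := by omega
  wlog hfar : dist (c' i) (q i) ≤ dist (c i) (q i) generalizing c c'
  · rw [max_comm]
    exact this (uIcc_comm (c i) (c' i) ▸ hO) hc' hc (le_of_not_ge hfar)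
  obtain ⟨p, hpO, hpj⟩ := hc
  refine ⟨p, hpO, le_max_of_le_left (EuclideanSpace.dist_le_dist_of_forall_dist_apply_le ?_)⟩
  intro k
  rcases hk k with rfl | rfl
  · exact (Real.dist_le_max_of_mem_uIcc (hO p hpO)).trans (max_le le_rfl hfar)
  · rw [hpj]

theorem uIcc_ite_of_ne {u u' : Bool} (h : u ≠ u') (lo hi : ℝ) :
    uIcc (if u then hi else lo) (if u' then hi else lo) = uIcc lo hi := by
  cases u <;> cases u' <;> simp_all [uIcc_comm]

theorem refinement_avoidance_disk_general
    (O : Set (EuclideanSpace ℝ (Fin 2))) (hO : O.Nonempty) (hOc : IsCompact O)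
    (a b : Fin 2 → ℝ)
    (ha : ∀ i, a i = sInf ((fun x => x i) '' O))
    (hb : ∀ i, b i = sSup ((fun x => x i) '' O))
    (corner : Bool → Bool → EuclideanSpace ℝ (Fin 2))
    (hcorner : ∀ u v, corner u v =
      (WithLp.toLp 2 ![if u then b 0 else a 0, if v then b 1 else a 1] : EuclideanSpace ℝ (Fin 2)))
    (q : EuclideanSpace ℝ (Fin 2)) (ε : ℝ)
    (htwo : ∃ u v u' v' : Bool, (u, v) ≠ (u', v') ∧
      dist (corner u v) q ≤ ε ∧ dist (corner u' v') q ≤ ε) :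
    ∃ p ∈ O, dist p q ≤ ε := by
  have hproj (i : Fin 2) : IsCompact ((fun x : EuclideanSpace ℝ (Fin 2) => x i) '' O) :=
    hOc.image (by fun_prop)
  have hbox (i : Fin 2) : ∀ x ∈ O, x i ∈ uIcc (a i) (b i) := fun x hx =>
    Icc_subset_uIcc ⟨ha i ▸ csInf_le (hproj i).bddBelow (mem_image_of_mem _ hx),
      hb i ▸ le_csSup (hproj i).bddAbove (mem_image_of_mem _ hx)⟩
  have hext (i : Fin 2) (w : Bool) : ∃ p ∈ O, p i = if w then b i else a i := by
    cases w
    · exact ha i ▸ (hproj i).sInf_mem (hO.image _)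
    · exact hb i ▸ (hproj i).sSup_mem (hO.image _)
  obtain ⟨u, v, u', v', hne, hd, hd'⟩ := htwo
  suffices ∃ p ∈ O, dist p q ≤ max (dist (corner u v) q) (dist (corner u' v') q) by
    obtain ⟨p, hpO, hp⟩ := this
    exact ⟨p, hpO, hp.trans (max_le hd hd')⟩
  simp only [hcorner]
  by_cases hu : u = u'
  · have hv : v ≠ v' := fun hv => hne (by rw [hu, hv])
    refine exists_mem_dist_le_max_of_mem_uIcc (i := 1) (j := 0) (by decide) q ?_
      (hext 0 u) (hext 0 u')
    simpa [uIcc_ite_of_ne hv] using hbox 1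
  · refine exists_mem_dist_le_max_of_mem_uIcc (i := 0) (j := 1) (by decide) q ?_
      (hext 1 v) (hext 1 v')
    simpa [uIcc_ite_of_ne hu] using hbox 0

/-- **Refinement avoidance for disk queries.** Let `O` be a nonempty compact
subset of the Euclidean plane with minimum bounding box `[a 0, b 0] × [a 1, b 1]`
(coordinatewise inf/sup over `O`), with corners `corner u v` for `u, v ∈ {0,1}`
(encoded as Booleans). If at least two distinct corners of the bounding box lie
within Euclidean distance `ε ≥ 0` of a point `q`, then there is a point of `O`
within distance `ε` of `q`; i.e. the object intersects the disk and the
refinement step can be avoided. -/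
theorem refinement_avoidance_disk
    (O : Set (EuclideanSpace ℝ (Fin 2))) (hO : O.Nonempty) (hOc : IsCompact O)
    (a b : Fin 2 → ℝ)
    (ha : ∀ i, a i = sInf ((fun x => x i) '' O))
    (hb : ∀ i, b i = sSup ((fun x => x i) '' O))
    (corner : Bool → Bool → EuclideanSpace ℝ (Fin 2))
    (hcorner : ∀ u v, corner u v =
      (WithLp.toLp 2 ![if u then b 0 else a 0, if v then b 1 else a 1] : EuclideanSpace ℝ (Fin 2)))
    (q : EuclideanSpace ℝ (Fin 2)) (ε : ℝ) (hε : 0 ≤ ε)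
    (htwo : ∃ u v u' v' : Bool, (u, v) ≠ (u', v') ∧
      dist (corner u v) q ≤ ε ∧ dist (corner u' v') q ≤ ε) :
    ∃ p ∈ O, dist p q ≤ ε :=
  refinement_avoidance_disk_general O hO hOc a b ha hb corner hcorner q ε htwo
end

section
/- Correctness of the two-level range query evaluation (each result reported exactly once): Fix d ≥ 1 and per-dimension widths w : Fin d → ℝ with w_i > 0; for k ∈ ℤᵈ let the grid tile T_k be the half-open box { x ∈ ℝᵈ : ∀ i, k_i·w_i ≤ x_i < (k_i + 1)·w_i }. Let r and W be nonempty closed boxes in ℝᵈ with lower corners a and c respectively, and suppose r ∩ W ≠ ∅. Say that a box with lower corner p starts before tile T_k in dimension i if p_i < k_i·w_i. Then there exists exactly one k ∈ ℤᵈ such that: (1) r ∩ T_k ≠ ∅, (2) W ∩ T_k ≠ ∅, and (3) for every dimension i it is not the case that both r and W start before T_k in dimension i; namely the tile with k_i = ⌊max(a_i, c_i) / w_i⌋ for each i. Hence, under the filtering rules (which at each tile intersecting W examine a rectangle's class in dimension i only when conditions (1)–(3) hold), every rectangle intersecting W is reported at exactly one tile: no results are missed and no duplicates are generated. -/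
/-- **Correctness of the two-level range query evaluation.** Fix `d ≥ 1` and
tile widths `w i > 0`, with half-open grid tiles
`T k = {x | ∀ i, k i * w i ≤ x i < (k i + 1) * w i}`. Let `r` and `W` be
nonempty closed boxes with lower corners `a`, `c` and upper corners `b`, `e`,
and suppose `r ∩ W ≠ ∅`. Then there is exactly one tile `T k` such that
(1) `r ∩ T k ≠ ∅`, (2) `W ∩ T k ≠ ∅`, and (3) in no dimension `i` do both
`r` and `W` start before `T k` (start strictly left of `k i * w i`); namely
the tile with `k i = ⌊max (a i) (c i) / w i⌋`. Hence every rectangle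
intersecting `W` is reported at exactly one tile. -/
theorem two_level_range_query_unique_tile
    (d : ℕ) (hd : 1 ≤ d)
    (w : Fin d → ℝ) (hw : ∀ i, 0 < w i)
    (T : (Fin d → ℤ) → Set (Fin d → ℝ))
    (hT : ∀ k, T k = {x | ∀ i, (k i : ℝ) * w i ≤ x i ∧ x i < (k i + 1 : ℤ) * w i})
    (a b c e : Fin d → ℝ) (hab : ∀ i, a i ≤ b i) (hce : ∀ i, c i ≤ e i)
    (r : Set (Fin d → ℝ)) (hr : r = {x | ∀ i, a i ≤ x i ∧ x i ≤ b i})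
    (W : Set (Fin d → ℝ)) (hW : W = {x | ∀ i, c i ≤ x i ∧ x i ≤ e i})
    (hrW : (r ∩ W).Nonempty) :
    (∃! k : Fin d → ℤ,
        (r ∩ T k).Nonempty ∧ (W ∩ T k).Nonempty ∧
        ∀ i, ¬(a i < (k i : ℝ) * w i ∧ c i < (k i : ℝ) * w i)) ∧
    (let k₀ : Fin d → ℤ := fun i => ⌊max (a i) (c i) / w i⌋
     (r ∩ T k₀).Nonempty ∧ (W ∩ T k₀).Nonempty ∧
       ∀ i, ¬(a i < (k₀ i : ℝ) * w i ∧ c i < (k₀ i : ℝ) * w i)) := by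
  obtain ⟨x, hxr, hxW⟩ := hrW
  rw [hr] at hxr; rw [hW] at hxW
  set m : Fin d → ℝ := fun i => max (a i) (c i) with hm
  set k₀ : Fin d → ℤ := fun i => ⌊m i / w i⌋ with hk₀
  have hmb : ∀ i, m i ≤ b i := fun i =>
    max_le (hab i) (le_trans (hxW i).1 (hxr i).2)
  have hme : ∀ i, m i ≤ e i := fun i =>
    max_le (le_trans (hxr i).1 (hxW i).2) (hce i)
  have hfloor : ∀ i, (k₀ i : ℝ) * w i ≤ m i ∧ m i < (k₀ i + 1 : ℤ) * w i := by
    intro i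
    constructor
    · rw [← le_div_iff₀ (hw i)]; exact Int.floor_le _
    · push_cast
      rw [← div_lt_iff₀ (hw i)]; exact Int.lt_floor_add_one _
  have hk₀sat : (r ∩ T k₀).Nonempty ∧ (W ∩ T k₀).Nonempty ∧
      ∀ i, ¬(a i < (k₀ i : ℝ) * w i ∧ c i < (k₀ i : ℝ) * w i) := by
    refine ⟨⟨m, ?_, ?_⟩, ⟨m, ?_, ?_⟩, ?_⟩
    · rw [hr]; exact fun i => ⟨le_max_left _ _, hmb i⟩
    · rw [hT]; exact fun i => hfloor i
    · rw [hW]; exact fun i => ⟨le_max_right _ _, hme i⟩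
    · rw [hT]; exact fun i => hfloor i
    · intro i ⟨h1, h2⟩
      exact absurd (hfloor i).1 (not_le.mpr (max_lt h1 h2))
  refine ⟨⟨k₀, hk₀sat, ?_⟩, hk₀sat⟩
  rintro k ⟨⟨y, hyr, hyT⟩, ⟨z, hzW, hzT⟩, h3⟩
  rw [hr] at hyr; rw [hW] at hzW; rw [hT] at hyT hzT
  funext i
  have hy := hyT i; have hz := hzT i
  have hlow : (k i : ℝ) * w i ≤ m i := by
    rcases not_and_or.mp (h3 i) with h | h
    · exact le_trans (not_lt.mp h) (le_max_left _ _)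
    · exact le_trans (not_lt.mp h) (le_max_right _ _)
  have hhigh : m i < (k i + 1 : ℤ) * w i := by
    apply max_lt
    · exact lt_of_le_of_lt (hyr i).1 hy.2
    · exact lt_of_le_of_lt (hzW i).1 hz.2
  symm
  rw [Int.floor_eq_iff]
  constructor
  · rw [le_div_iff₀ (hw i)]; exact hlow
  · rw [div_lt_iff₀ (hw i)]
    have := hhigh; push_cast at this ⊢; linarith
end
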